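/- arXiv:2109.05328 — 3 statements merged into one kernel-verified Lean document; each statement's English description precedes it below -/
import Mathlib

section
/- Let F be a free group and a, f1, f2, f ∈ F, and let n be a positive integer. Then [a^n, f1, f2]^f ≡ [a, f1, f2]^n · [a, f1, a, f2]^(n choose 2) · [a, f1, f2, f]^n modulo γ₅(F), the fifth term of the lower central series of F. -/
/-- The commutator `[x,y] = x⁻¹y⁻¹xy`. -/
def gcomm {G : Type*} [Group G] (x y : G) : G := x⁻¹ * y⁻¹ * x * y

open scoped commutatorElement

section Helpers

variable {G : Type*} [Group G]

lemma lcs_succ (n : ℕ) : Subgroup.lowerCentralSeries (⊤ : Subgroup G) (n + 1) = ⁅Subgroup.lowerCentralSeries (⊤ : Subgroup G) n, ⊤⁆ := rfl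

lemma gcomm_eq_commutatorElement (x y : G) : gcomm x y = ⁅x⁻¹, y⁻¹⁆ := by
  simp [gcomm, commutatorElement_def]

lemma gcomm_one_left (z : G) : gcomm 1 z = 1 := by simp [gcomm]

lemma gcomm_one_right (z : G) : gcomm z 1 = 1 := by simp [gcomm]

lemma Commute.gcomm_eq_one {x y : G} (h : Commute x y) : gcomm x y = 1 := by
  rw [gcomm_eq_commutatorElement, commutatorElement_eq_one_iff_commute]
  exact h.inv_inv

lemma gcomm_mul_left (x y z : G) :
    gcomm (x * y) z = y⁻¹ * gcomm x z * y * gcomm y z := by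
  simp only [gcomm]; group

lemma gcomm_mul_right (x y z : G) :
    gcomm x (y * z) = gcomm x z * (z⁻¹ * gcomm x y * z) := by
  simp only [gcomm]; group

lemma conj_eq_mul_gcomm (x y : G) : y⁻¹ * x * y = x * gcomm x y := by
  simp only [gcomm]; group

lemma Commute.conj_pow_eq {x y : G} (h : Commute x y) (k : ℕ) :
    (y ^ k)⁻¹ * x * y ^ k = x := by
  rw [mul_assoc, (h.pow_right k).eq, ← mul_assoc, inv_mul_cancel, one_mul]

lemma gcomm_pow_left {x z : G} (h : Commute (gcomm x z) x) (n : ℕ) :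
    gcomm (x ^ n) z = gcomm x z ^ n := by
  induction n with
  | zero => simp [gcomm_one_left]
  | succ k ih =>
    rw [pow_succ', gcomm_mul_left, ih, h.conj_pow_eq, ← pow_succ']

lemma gcomm_pow_right {x z : G} (h : Commute (gcomm x z) z) (n : ℕ) :
    gcomm x (z ^ n) = gcomm x z ^ n := by
  induction n with
  | zero => simp [gcomm_one_right]
  | succ k ih =>
    rw [pow_succ', gcomm_mul_right, ih, h.conj_pow_eq, ← pow_succ]

lemma gcomm_mem_lcs {x : G} {n : ℕ} (hx : x ∈ Subgroup.lowerCentralSeries (⊤ : Subgroup G) n) (y : G) :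
    gcomm x y ∈ Subgroup.lowerCentralSeries (⊤ : Subgroup G) (n + 1) := by
  rw [gcomm_eq_commutatorElement, lcs_succ]
  exact Subgroup.commutator_mem_commutator (inv_mem hx) (Subgroup.mem_top y⁻¹)

lemma three_subgroups_le (H₁ H₂ H₃ N : Subgroup G) [N.Normal]
    (h1 : ⁅⁅H₂, H₃⁆, H₁⁆ ≤ N) (h2 : ⁅⁅H₃, H₁⁆, H₂⁆ ≤ N) : ⁅⁅H₁, H₂⁆, H₃⁆ ≤ N := by
  have kq : (QuotientGroup.mk' N).ker = N := QuotientGroup.ker_mk' N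
  rw [← kq, ← Subgroup.map_eq_bot_iff] at h1 h2 ⊢
  rw [Subgroup.map_commutator, Subgroup.map_commutator] at h1 h2 ⊢
  exact Subgroup.commutator_commutator_eq_bot_of_rotate h1 h2

lemma lcs_commutator_le (m n : ℕ) :
    ⁅Subgroup.lowerCentralSeries (⊤ : Subgroup G) m, Subgroup.lowerCentralSeries (⊤ : Subgroup G) n⁆ ≤ Subgroup.lowerCentralSeries (⊤ : Subgroup G) (m + n + 1) := by
  induction n generalizing m with
  | zero =>
    rw [Subgroup.lowerCentralSeries_zero]
    exact le_of_eq (lcs_succ m).symm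
  | succ n ih =>
    have e : ⁅(⊤ : Subgroup G), Subgroup.lowerCentralSeries (⊤ : Subgroup G) m⁆ = Subgroup.lowerCentralSeries (⊤ : Subgroup G) (m + 1) := by
      rw [Subgroup.commutator_comm]; exact (lcs_succ m).symm
    have h1 : ⁅⁅(⊤ : Subgroup G), Subgroup.lowerCentralSeries (⊤ : Subgroup G) m⁆, Subgroup.lowerCentralSeries (⊤ : Subgroup G) n⁆ ≤
        Subgroup.lowerCentralSeries (⊤ : Subgroup G) (m + (n + 1) + 1) := by
      rw [e]
      have h := ih (m + 1)
      have e2 : m + 1 + n + 1 = m + (n + 1) + 1 := by omega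
      rwa [e2] at h
    have h2 : ⁅⁅Subgroup.lowerCentralSeries (⊤ : Subgroup G) m, Subgroup.lowerCentralSeries (⊤ : Subgroup G) n⁆, (⊤ : Subgroup G)⁆ ≤
        Subgroup.lowerCentralSeries (⊤ : Subgroup G) (m + (n + 1) + 1) := by
      refine le_trans (Subgroup.commutator_mono (ih m) le_rfl) ?_
      rw [← lcs_succ]
      exact le_of_eq (by congr 1)
    have h := three_subgroups_le (Subgroup.lowerCentralSeries (⊤ : Subgroup G) n) ⊤ (Subgroup.lowerCentralSeries (⊤ : Subgroup G) m)
      (Subgroup.lowerCentralSeries (⊤ : Subgroup G) (m + (n + 1) + 1)) h1 h2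
    calc ⁅Subgroup.lowerCentralSeries (⊤ : Subgroup G) m, Subgroup.lowerCentralSeries (⊤ : Subgroup G) (n + 1)⁆
        = ⁅⁅Subgroup.lowerCentralSeries (⊤ : Subgroup G) n, ⊤⁆, Subgroup.lowerCentralSeries (⊤ : Subgroup G) m⁆ := by
          rw [Subgroup.commutator_comm]; rfl
      _ ≤ _ := h

lemma lcs_map_surjective {H : Type*} [Group H] (f : G →* H) (hf : Function.Surjective f)
    (n : ℕ) : Subgroup.map f (Subgroup.lowerCentralSeries (⊤ : Subgroup G) n) = Subgroup.lowerCentralSeries (⊤ : Subgroup H) n := by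
  induction n with
  | zero =>
    rw [Subgroup.lowerCentralSeries_zero, Subgroup.lowerCentralSeries_zero]
    exact Subgroup.map_top_of_surjective f hf
  | succ n ih =>
    rw [lcs_succ, lcs_succ, Subgroup.map_commutator, ih,
      Subgroup.map_top_of_surjective f hf]

lemma key_identity (Hc : ∀ x ∈ Subgroup.lowerCentralSeries (⊤ : Subgroup G) 3, ∀ y : G, Commute x y)
    (H12 : ∀ x ∈ Subgroup.lowerCentralSeries (⊤ : Subgroup G) 1, ∀ y ∈ Subgroup.lowerCentralSeries (⊤ : Subgroup G) 2, Commute x y)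
    (a f1 f2 f : G) (n : ℕ) :
    f⁻¹ * gcomm (gcomm (a ^ n) f1) f2 * f =
      gcomm (gcomm a f1) f2 ^ n * gcomm (gcomm (gcomm a f1) a) f2 ^ n.choose 2 *
        gcomm (gcomm (gcomm a f1) f2) f ^ n := by
  set b := gcomm a f1 with hb_def
  set d := gcomm b a with hd_def
  set c := gcomm b f2 with hc_def
  set u := gcomm d a with hu_def
  set h := gcomm d f2 with hh_def
  set q := gcomm c f with hq_def
  have hb : b ∈ Subgroup.lowerCentralSeries (⊤ : Subgroup G) 1 := gcomm_mem_lcs (by rw [Subgroup.lowerCentralSeries_zero]; trivial) f1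
  have hd : d ∈ Subgroup.lowerCentralSeries (⊤ : Subgroup G) 2 := gcomm_mem_lcs hb a
  have hc : c ∈ Subgroup.lowerCentralSeries (⊤ : Subgroup G) 2 := gcomm_mem_lcs hb f2
  have hu : ∀ y : G, Commute u y := Hc u (gcomm_mem_lcs hd a)
  have hh : ∀ y : G, Commute h y := Hc h (gcomm_mem_lcs hd f2)
  have hq : ∀ y : G, Commute q y := Hc q (gcomm_mem_lcs hc f)
  have hbd : Commute b d := H12 b hb d hd
  have hbc : Commute b c := H12 b hb c hc
  have hcd : Commute c d := H12 c (Subgroup.lowerCentralSeries_antitone ⊤ (by norm_num) hc) d hd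
  -- Step 1: gcomm b (a^k) = d^k * u^(k choose 2)
  have step1 : ∀ k : ℕ, gcomm b (a ^ k) = d ^ k * u ^ k.choose 2 := by
    intro k
    induction k with
    | zero => simp [gcomm_one_right]
    | succ k ih =>
      have ec : (k + 1).choose 2 = k.choose 2 + k := by
        rw [Nat.choose_succ_succ, Nat.choose_one_right, Nat.add_comm]
      rw [pow_succ', gcomm_mul_right, ih, conj_eq_mul_gcomm, ← hd_def,
        gcomm_pow_right (hu a) k, ← hu_def, ec]
      have e1 : u ^ k.choose 2 * d = d * u ^ k.choose 2 := ((hu d).pow_left (k.choose 2)).eq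
      calc d ^ k * u ^ k.choose 2 * (d * u ^ k)
          = d ^ k * (u ^ k.choose 2 * d) * u ^ k := by group
        _ = d ^ k * (d * u ^ k.choose 2) * u ^ k := by rw [e1]
        _ = d ^ (k + 1) * u ^ (k.choose 2 + k) := by
            rw [pow_succ, pow_add]; group
  -- Step 2: gcomm (a^k) f1 = b^k * d^(k choose 2) * u^(k choose 3)
  have step2 : ∀ k : ℕ, gcomm (a ^ k) f1 = b ^ k * d ^ k.choose 2 * u ^ k.choose 3 := by
    intro k
    induction k with
    | zero => simp [gcomm_one_left]
    | succ k ih =>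
      have ec2 : (k + 1).choose 2 = k + k.choose 2 := by
        rw [Nat.choose_succ_succ, Nat.choose_one_right]
      have ec3 : (k + 1).choose 3 = k.choose 2 + k.choose 3 := Nat.choose_succ_succ k 2
      rw [pow_succ', gcomm_mul_left, ih, conj_eq_mul_gcomm, ← hb_def, step1 k, ec2, ec3]
      have e1 : u ^ k.choose 2 * b ^ k = b ^ k * u ^ k.choose 2 :=
        ((hu (b ^ k)).pow_left (k.choose 2)).eq
      have e2 : d ^ k * b ^ k = b ^ k * d ^ k := (hbd.symm.pow_pow k k).eq
      have e3 : u ^ k.choose 2 * d ^ k.choose 2 = d ^ k.choose 2 * u ^ k.choose 2 :=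
        ((hu (d ^ k.choose 2)).pow_left (k.choose 2)).eq
      calc b * (d ^ k * u ^ k.choose 2) * (b ^ k * d ^ k.choose 2 * u ^ k.choose 3)
          = b * (d ^ k * (u ^ k.choose 2 * b ^ k) * d ^ k.choose 2 * u ^ k.choose 3) := by
            group
        _ = b * (d ^ k * (b ^ k * u ^ k.choose 2) * d ^ k.choose 2 * u ^ k.choose 3) := by
            rw [e1]
        _ = b * ((d ^ k * b ^ k) * (u ^ k.choose 2 * d ^ k.choose 2) * u ^ k.choose 3) := by
            group
        _ = b * ((b ^ k * d ^ k) * (d ^ k.choose 2 * u ^ k.choose 2) * u ^ k.choose 3) := by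
            rw [e2, e3]
        _ = b ^ (k + 1) * d ^ (k + k.choose 2) * u ^ (k.choose 2 + k.choose 3) := by
            rw [pow_succ', pow_add, pow_add]; group
  -- Step 3
  have eA : gcomm (b ^ n * d ^ n.choose 2) f2 = c ^ n * h ^ n.choose 2 := by
    rw [gcomm_mul_left, gcomm_pow_left hbc.symm n, gcomm_pow_left (hh d) (n.choose 2),
      ← hh_def, (hcd.pow_left n).conj_pow_eq]
  have step3 : gcomm (gcomm (a ^ n) f1) f2 = c ^ n * h ^ n.choose 2 := by
    rw [step2 n, gcomm_mul_left, ((hu f2).pow_left (n.choose 3)).gcomm_eq_one, mul_one, eA,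
      (hu (c ^ n * h ^ n.choose 2)).symm.conj_pow_eq (n.choose 3)]
  -- Step 4
  have step4 : gcomm (c ^ n * h ^ n.choose 2) f = q ^ n := by
    rw [gcomm_mul_left, ((hh f).pow_left (n.choose 2)).gcomm_eq_one, mul_one,
      gcomm_pow_left (hq c) n, ← hq_def, ((hq h).pow_left n).conj_pow_eq (n.choose 2)]
  calc f⁻¹ * gcomm (gcomm (a ^ n) f1) f2 * f
      = gcomm (gcomm (a ^ n) f1) f2 * gcomm (gcomm (gcomm (a ^ n) f1) f2) f :=
        conj_eq_mul_gcomm _ f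
    _ = c ^ n * h ^ n.choose 2 * gcomm (c ^ n * h ^ n.choose 2) f := by rw [step3]
    _ = c ^ n * h ^ n.choose 2 * q ^ n := by rw [step4]

end Helpers

theorem stmt0 {α : Type*} (a f1 f2 f : FreeGroup α) (n : ℕ) (hn : 0 < n) :
    (f⁻¹ * gcomm (gcomm (a ^ n) f1) f2 * f)⁻¹ *
      (gcomm (gcomm a f1) f2 ^ n * gcomm (gcomm (gcomm a f1) a) f2 ^ n.choose 2 *
        gcomm (gcomm (gcomm a f1) f2) f ^ n) ∈
      Subgroup.lowerCentralSeries (⊤ : Subgroup (FreeGroup α)) 4 := by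
  set N := Subgroup.lowerCentralSeries (⊤ : Subgroup (FreeGroup α)) 4 with hN
  let π : FreeGroup α →* FreeGroup α ⧸ N := QuotientGroup.mk' N
  have hπs : Function.Surjective π := QuotientGroup.mk'_surjective N
  have hker : π.ker = N := QuotientGroup.ker_mk' N
  have hbot : Subgroup.lowerCentralSeries (⊤ : Subgroup (FreeGroup α ⧸ N)) 4 = ⊥ := by
    rw [← lcs_map_surjective π hπs 4, Subgroup.map_eq_bot_iff, hker]
  have Hc : ∀ x ∈ Subgroup.lowerCentralSeries (⊤ : Subgroup (FreeGroup α ⧸ N)) 3, ∀ y, Commute x y := by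
    intro x hx y
    have h4 : ⁅x, y⁆ ∈ Subgroup.lowerCentralSeries (⊤ : Subgroup (FreeGroup α ⧸ N)) 4 := by
      show ⁅x, y⁆ ∈ Subgroup.lowerCentralSeries (⊤ : Subgroup (FreeGroup α ⧸ N)) (3 + 1)
      rw [lcs_succ]
      exact Subgroup.commutator_mem_commutator hx (Subgroup.mem_top y)
    rw [hbot, Subgroup.mem_bot] at h4
    exact commutatorElement_eq_one_iff_commute.mp h4
  have H12 : ∀ x ∈ Subgroup.lowerCentralSeries (⊤ : Subgroup (FreeGroup α ⧸ N)) 1,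
      ∀ y ∈ Subgroup.lowerCentralSeries (⊤ : Subgroup (FreeGroup α ⧸ N)) 2, Commute x y := by
    intro x hx y hy
    have h4 : ⁅x, y⁆ ∈ Subgroup.lowerCentralSeries (⊤ : Subgroup (FreeGroup α ⧸ N)) 4 := by
      show ⁅x, y⁆ ∈ Subgroup.lowerCentralSeries (⊤ : Subgroup (FreeGroup α ⧸ N)) (1 + 2 + 1)
      exact lcs_commutator_le 1 2 (Subgroup.commutator_mem_commutator hx hy)
    rw [hbot, Subgroup.mem_bot] at h4
    exact commutatorElement_eq_one_iff_commute.mp h4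
  rw [← hker, MonoidHom.mem_ker, map_mul, map_inv, inv_mul_eq_one]
  have hg : ∀ x y : FreeGroup α, π (gcomm x y) = gcomm (π x) (π y) := by
    intro x y; simp [gcomm]
  simp only [map_mul, map_inv, map_pow, hg]
  exact key_identity Hc H12 (π a) (π f1) (π f2) (π f) n
end

section
/- Let p be a prime, α ≥ β ≥ γ ≥ 1, 0 ≤ ρ ≤ γ, 0 ≤ σ ≤ γ, and let G be the group with presentation ⟨a, b ∣ [a,b]^{p^γ} = [a,b,b] = [a,b,a] = 1, a^{p^α} = [a,b]^{p^ρ}, b^{p^β} = [a,b]^{p^σ}⟩. Then G has order p^{α+β+γ} and nilpotency class at most 2. -/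
/-- The free generators `a`, `b` of the free group on two generators. -/
def aF : FreeGroup Bool := FreeGroup.of true
def bF : FreeGroup Bool := FreeGroup.of false


-- Auxiliary development: the integral Heisenberg group and its quotients.

@[ext] structure Heis where
  x : ℤ
  y : ℤ
  z : ℤ

namespace Heis

instance : One Heis := ⟨⟨0,0,0⟩⟩
instance : Mul Heis := ⟨fun g h => ⟨g.x + h.x, g.y + h.y, g.z + h.z + h.x * g.y⟩⟩
instance : Inv Heis := ⟨fun g => ⟨-g.x, -g.y, -g.z + g.x * g.y⟩⟩

@[simp] lemma one_x : (1 : Heis).x = 0 := rfl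
@[simp] lemma one_y : (1 : Heis).y = 0 := rfl
@[simp] lemma one_z : (1 : Heis).z = 0 := rfl
@[simp] lemma mul_x (g h : Heis) : (g * h).x = g.x + h.x := rfl
@[simp] lemma mul_y (g h : Heis) : (g * h).y = g.y + h.y := rfl
@[simp] lemma mul_z (g h : Heis) : (g * h).z = g.z + h.z + h.x * g.y := rfl
@[simp] lemma inv_x (g : Heis) : (g⁻¹).x = -g.x := rfl
@[simp] lemma inv_y (g : Heis) : (g⁻¹).y = -g.y := rfl
@[simp] lemma inv_z (g : Heis) : (g⁻¹).z = -g.z + g.x * g.y := rfl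

instance : Group Heis where
  mul_assoc a b c := by ext <;> simp <;> ring
  one_mul a := by ext <;> simp
  mul_one a := by ext <;> simp
  inv_mul_cancel a := by ext <;> simp <;> ring

def A : Heis := ⟨1,0,0⟩
def B : Heis := ⟨0,1,0⟩

@[simp] lemma A_zpow (n : ℤ) : A ^ n = ⟨n,0,0⟩ := by
  induction n using Int.induction_on with
  | zero => rw [zpow_zero]; rfl
  | succ n ih => rw [zpow_add_one, ih]; ext <;> simp [A]
  | pred n ih => rw [zpow_sub_one, ih]; ext <;> simp [A] <;> ring

@[simp] lemma B_zpow (n : ℤ) : B ^ n = ⟨0,n,0⟩ := by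
  induction n using Int.induction_on with
  | zero => rw [zpow_zero]; rfl
  | succ n ih => rw [zpow_add_one, ih]; ext <;> simp [B]
  | pred n ih => rw [zpow_sub_one, ih]; ext <;> simp [B] <;> ring

@[simp] lemma A_pow (n : ℕ) : A ^ n = ⟨n,0,0⟩ := by
  rw [← zpow_natCast, A_zpow]

@[simp] lemma B_pow (n : ℕ) : B ^ n = ⟨0,n,0⟩ := by
  rw [← zpow_natCast, B_zpow]

lemma gcommAB : gcomm A B = ⟨0,0,-1⟩ := by
  ext <;> simp [gcomm, A, B]

@[simp] lemma C_zpow (n : ℤ) : (⟨0,0,-1⟩ : Heis) ^ n = ⟨0,0,-n⟩ := by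
  induction n using Int.induction_on with
  | zero => rw [zpow_zero]; rfl
  | succ n ih => rw [zpow_add_one, ih]; ext <;> simp <;> ring
  | pred n ih => rw [zpow_sub_one, ih]; ext <;> simp <;> ring

@[simp] lemma C_pow (n : ℕ) : (⟨0,0,-1⟩ : Heis) ^ n = ⟨0,0,-n⟩ := by
  rw [← zpow_natCast, C_zpow]

lemma central_z (t : ℤ) (g : Heis) : g * ⟨0,0,t⟩ = (⟨0,0,t⟩ : Heis) * g := by
  ext <;> simp <;> ring

open scoped commutatorElement in
lemma comm_form (g h : Heis) : ⁅g, h⁆ = ⟨0, 0, (⁅g, h⁆).z⟩ := by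
  ext <;> simp [commutatorElement_def] <;> ring

end Heis


namespace Heis

def N (pa pb pc r s : ℤ) (hpa : pc ∣ pa) (hpb : pc ∣ pb) : Subgroup Heis where
  carrier := {g | ∃ u v : ℤ, g.x = pa * u ∧ g.y = pb * v ∧ pc ∣ g.z - u * r - v * s}
  one_mem' := ⟨0, 0, by simp⟩
  mul_mem' := by
    rintro g h ⟨u, v, hx, hy, hz⟩ ⟨u', v', hx', hy', hz'⟩
    refine ⟨u + u', v + v', by rw [mul_x, hx, hx']; ring, by rw [mul_y, hy, hy']; ring, ?_⟩
    have key : (g*h).z - (u+u')*r - (v+v')*s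
        = (g.z - u*r - v*s) + (h.z - u'*r - v'*s) + (pa*u')*(pb*v) := by
      rw [mul_z, hx', hy]; ring
    rw [key]
    exact dvd_add (dvd_add hz hz') ((hpa.mul_right u').mul_right _)
  inv_mem' := by
    rintro g ⟨u, v, hx, hy, hz⟩
    refine ⟨-u, -v, by rw [inv_x, hx]; ring, by rw [inv_y, hy]; ring, ?_⟩
    have key : (g⁻¹).z - (-u)*r - (-v)*s
        = -(g.z - u*r - v*s) + (pa*u)*(pb*v) := by
      rw [inv_z, hx, hy]; ring
    rw [key]
    exact dvd_add (dvd_neg.mpr hz) ((hpa.mul_right u).mul_right _)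

lemma mem_N {pa pb pc r s : ℤ} {hpa : pc ∣ pa} {hpb : pc ∣ pb} {g : Heis} :
    g ∈ N pa pb pc r s hpa hpb ↔
      ∃ u v : ℤ, g.x = pa * u ∧ g.y = pb * v ∧ pc ∣ g.z - u * r - v * s := Iff.rfl

instance N_normal (pa pb pc r s : ℤ) (hpa : pc ∣ pa) (hpb : pc ∣ pb) :
    (N pa pb pc r s hpa hpb).Normal := by
  constructor
  rintro n ⟨u, v, hx, hy, hz⟩ g
  refine ⟨u, v, by simp [hx], by simp [hy], ?_⟩
  have key : (g*n*g⁻¹).z - u*r - v*s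
      = (n.z - u*r - v*s) + (pa*u)*g.y - (pb*v)*g.x := by
    simp only [mul_z, mul_x, mul_y, inv_x, inv_y, inv_z, hx, hy]; ring
  rw [key]
  exact dvd_sub (dvd_add hz ((hpa.mul_right u).mul_right _)) ((hpb.mul_right v).mul_right _)

lemma cast_dvd (n : ℕ) [NeZero n] (m : ℤ) : (n:ℤ) ∣ ((m : ZMod n).val : ℤ) - m := by
  have h1 : ((((m : ZMod n).val : ℤ) - m : ℤ) : ZMod n) = 0 := by
    push_cast
    rw [ZMod.natCast_val, ZMod.cast_id, sub_self]
  exact (ZMod.intCast_zmod_eq_zero_iff_dvd _ n).mp h1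

set_option maxHeartbeats 2000000 in
theorem card_quot (pa pb pc : ℕ) (hpa : 0 < pa) (hpb : 0 < pb) (hpc : 0 < pc)
    (r s : ℤ) (ha : ((pc:ℤ)) ∣ ((pa:ℤ))) (hb : ((pc:ℤ)) ∣ ((pb:ℤ))) :
    Nat.card (Heis ⧸ N (pa:ℤ) (pb:ℤ) (pc:ℤ) r s ha hb) = pa * pb * pc := by
  haveI : NeZero pa := ⟨hpa.ne'⟩
  haveI : NeZero pb := ⟨hpb.ne'⟩
  haveI : NeZero pc := ⟨hpc.ne'⟩
  let θ : ZMod pa × ZMod pb × ZMod pc → Heis ⧸ N (pa:ℤ) (pb:ℤ) (pc:ℤ) r s ha hb :=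
    fun t => QuotientGroup.mk ⟨(t.1.val : ℤ), (t.2.1.val : ℤ), (t.2.2.val : ℤ)⟩
  have hbij : Function.Bijective θ := by
    constructor
    · rintro ⟨x, y, z⟩ ⟨x', y', z'⟩ h
      simp only [θ] at h
      rw [QuotientGroup.eq, mem_N] at h
      obtain ⟨u, v, hx, hy, hz⟩ := h
      simp only [inv_x, inv_y, inv_z, mul_x, mul_y, mul_z] at hx hy hz
      have vxlt := ZMod.val_lt x; have vxlt' := ZMod.val_lt x'
      have vylt := ZMod.val_lt y; have vylt' := ZMod.val_lt y'
      have vzlt := ZMod.val_lt z; have vzlt' := ZMod.val_lt z'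
      have hu : u = 0 := by
        rcases lt_trichotomy u 0 with h'|h'|h'
        · nlinarith [Int.add_one_le_iff.mpr h']
        · exact h'
        · nlinarith [Int.add_one_le_iff.mpr h']
      have hx0 : x = x' := by
        have : (x.val : ℤ) = x'.val := by rw [hu] at hx; push_cast at hx ⊢; linarith
        exact ZMod.val_injective pa (by exact_mod_cast this)
      have hv : v = 0 := by
        rcases lt_trichotomy v 0 with h'|h'|h'
        · nlinarith [Int.add_one_le_iff.mpr h']
        · exact h'
        · nlinarith [Int.add_one_le_iff.mpr h']
      have hy0 : y = y' := by
        have : (y.val : ℤ) = y'.val := by rw [hv] at hy; push_cast at hy ⊢; linarith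
        exact ZMod.val_injective pb (by exact_mod_cast this)
      have hz0 : z = z' := by
        rw [hu, hv] at hz
        have hxx : (x.val : ℤ) = x'.val := by exact_mod_cast congrArg (fun t => (ZMod.val t : ℤ)) hx0
        have h2 : ((pc:ℤ)) ∣ (((z'.val : ℤ)) - ((z.val:ℤ))) := by
          have heq : (-(z.val:ℤ) + (x.val:ℤ)*(y.val:ℤ) + (z'.val:ℤ) + (x'.val:ℤ) * -(y.val:ℤ)) - 0*r - 0*s
              = (z'.val:ℤ) - (z.val:ℤ) := by rw [← hxx]; ring
          rwa [heq] at hz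
        obtain ⟨t, ht⟩ := h2
        have htt : t = 0 := by
          rcases lt_trichotomy t 0 with h'|h'|h'
          · nlinarith [Int.add_one_le_iff.mpr h']
          · exact h'
          · nlinarith [Int.add_one_le_iff.mpr h']
        have : (z.val : ℤ) = z'.val := by rw [htt] at ht; omega
        exact ZMod.val_injective pc (by exact_mod_cast this)
      exact Prod.ext hx0 (Prod.ext hy0 hz0)
    · intro q
      induction q using QuotientGroup.induction_on with
      | H g =>
        obtain ⟨x, y, z⟩ := g
        obtain ⟨u, hu⟩ := cast_dvd pa x
        obtain ⟨v, hv⟩ := cast_dvd pb y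
        refine ⟨((x : ZMod pa), (y : ZMod pb),
          (((z + ((y : ZMod pb)).val * (((x : ZMod pa)).val - x) + u * r + v * s : ℤ)) : ZMod pc)), ?_⟩
        set W : ℤ := z + ((y : ZMod pb)).val * (((x : ZMod pa)).val - x) + u * r + v * s with hW
        simp only [θ]
        rw [QuotientGroup.eq, mem_N]
        refine ⟨-u, -v, ?_, ?_, ?_⟩
        · simp only [inv_x, mul_x]; linear_combination -hu
        · simp only [inv_y, mul_y]; linear_combination -hv
        · simp only [inv_x, inv_y, inv_z, mul_x, mul_y, mul_z]
          have key : (-((((W : ZMod pc)).val:ℤ)) + (((x : ZMod pa)).val:ℤ) * (((y : ZMod pb)).val:ℤ) + z + x * -(((y : ZMod pb)).val:ℤ)) - (-u)*(r) - (-v)*(s)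
              = -(((((W : ZMod pc)).val:ℤ) - W)) := by
            rw [hW]; ring
          rw [key]
          exact dvd_neg.mpr (cast_dvd pc W)
  rw [Nat.card_congr (Equiv.ofBijective θ hbij).symm, Nat.card_prod, Nat.card_prod,
    Nat.card_zmod, Nat.card_zmod, Nat.card_zmod, Nat.mul_assoc]

end Heis

lemma map_gcomm {G H : Type*} [Group G] [Group H] (f : G →* H) (x y : G) :
    f (gcomm x y) = gcomm (f x) (f y) := by simp [gcomm]

lemma commute_of_gcomm_eq_one {G : Type*} [Group G] {x y : G} (h : gcomm x y = 1) :
    x * y = y * x := by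
  calc x * y = y * x * (gcomm x y) := by rw [gcomm]; group
  _ = y * x := by rw [h, mul_one]

lemma zpow_eq_zpow_of_dvd {G : Type*} [Group G] {a : G} {k : ℕ} (h : a ^ k = 1) {m n : ℤ}
    (hd : (k:ℤ) ∣ m - n) : a ^ m = a ^ n := by
  obtain ⟨t, ht⟩ := hd
  have hm : m = n + (k:ℤ) * t := by linarith
  rw [hm, zpow_add, zpow_mul, zpow_natCast, h, one_zpow, mul_one]

namespace Heis

lemma comm_central (g h k : Heis) :
    k * (g * h * g⁻¹ * h⁻¹) = (g * h * g⁻¹ * h⁻¹) * k := by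
  ext <;> simp <;> ring

open scoped commutatorElement in
lemma quot_comm_central (pa pb pc r s : ℤ) (hpa : pc ∣ pa) (hpb : pc ∣ pb) :
    ∀ u v : Heis ⧸ N pa pb pc r s hpa hpb, ⁅u, v⁆ ∈ Subgroup.center _ := by
  intro u v
  induction u using QuotientGroup.induction_on with | H g =>
  induction v using QuotientGroup.induction_on with | H h =>
  rw [Subgroup.mem_center_iff]
  intro w
  induction w using QuotientGroup.induction_on with | H k =>
  simp only [commutatorElement_def, ← QuotientGroup.mk_inv, ← QuotientGroup.mk_mul]
  congr 1
  exact comm_central g h k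

end Heis

theorem stmt4 (p α β γ ρ σ : ℕ) (hp : p.Prime) (h1 : 1 ≤ γ) (h2 : γ ≤ β) (h3 : β ≤ α)
    (h4 : ρ ≤ γ) (h5 : σ ≤ γ) (rels : Set (FreeGroup Bool))
    (hrels : rels = {gcomm aF bF ^ p ^ γ, gcomm (gcomm aF bF) bF, gcomm (gcomm aF bF) aF,
      aF ^ p ^ α * (gcomm aF bF ^ p ^ ρ)⁻¹, bF ^ p ^ β * (gcomm aF bF ^ p ^ σ)⁻¹}) :
    Nat.card (PresentedGroup rels) = p ^ (α + β + γ) ∧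
      commutator (PresentedGroup rels) ≤ Subgroup.center (PresentedGroup rels) := by
  have hp0 : 0 < p := hp.pos
  haveI hNa : NeZero (p^α) := ⟨(pow_pos hp0 α).ne'⟩
  haveI hNb : NeZero (p^β) := ⟨(pow_pos hp0 β).ne'⟩
  haveI hNc : NeZero (p^γ) := ⟨(pow_pos hp0 γ).ne'⟩
  have hdA : ((p^γ : ℕ) : ℤ) ∣ ((p^α : ℕ) : ℤ) :=
    Int.natCast_dvd_natCast.mpr (pow_dvd_pow p (h2.trans h3))
  have hdB : ((p^γ : ℕ) : ℤ) ∣ ((p^β : ℕ) : ℤ) :=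
    Int.natCast_dvd_natCast.mpr (pow_dvd_pow p h2)
  -- the concrete model
  let NN : Subgroup Heis :=
    Heis.N ((p^α : ℕ) : ℤ) ((p^β : ℕ) : ℤ) ((p^γ : ℕ) : ℤ) ((p^ρ : ℕ) : ℤ) ((p^σ : ℕ) : ℤ) hdA hdB
  let f : Bool → Heis ⧸ NN := fun t =>
    Bool.casesOn t (QuotientGroup.mk Heis.B) (QuotientGroup.mk Heis.A)
  have lift_a : FreeGroup.lift f aF = QuotientGroup.mk Heis.A := FreeGroup.lift_apply_of
  have lift_b : FreeGroup.lift f bF = QuotientGroup.mk Heis.B := FreeGroup.lift_apply_of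
  have hgc : gcomm (QuotientGroup.mk Heis.A : Heis ⧸ NN) (QuotientGroup.mk Heis.B)
      = QuotientGroup.mk (⟨0,0,-1⟩ : Heis) := by
    simp only [gcomm, ← QuotientGroup.mk_inv, ← QuotientGroup.mk_mul]
    rw [show Heis.A⁻¹ * Heis.B⁻¹ * Heis.A * Heis.B = (⟨0,0,-1⟩:Heis) from by
      ext <;> simp [Heis.A, Heis.B]]
  have hrel : ∀ r ∈ rels, FreeGroup.lift f r = 1 := by
    intro r hr
    rw [hrels] at hr
    simp only [Set.mem_insert_iff, Set.mem_singleton_iff] at hr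
    rcases hr with rfl | rfl | rfl | rfl | rfl
    · rw [map_pow, map_gcomm, lift_a, lift_b, hgc, ← QuotientGroup.mk_pow, Heis.C_pow,
        QuotientGroup.eq_one_iff, Heis.mem_N]
      exact ⟨0, 0, by simp, by simp, ⟨-1, by push_cast; ring⟩⟩
    · rw [map_gcomm, map_gcomm, lift_a, lift_b, hgc]
      simp only [gcomm, ← QuotientGroup.mk_inv, ← QuotientGroup.mk_mul]
      rw [QuotientGroup.eq_one_iff, Heis.mem_N]
      exact ⟨0, 0, by simp [Heis.B], by simp [Heis.B], by simp [Heis.B]⟩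
    · rw [map_gcomm, map_gcomm, lift_a, lift_b, hgc]
      simp only [gcomm, ← QuotientGroup.mk_inv, ← QuotientGroup.mk_mul]
      rw [QuotientGroup.eq_one_iff, Heis.mem_N]
      exact ⟨0, 0, by simp [Heis.A], by simp [Heis.A], by simp [Heis.A]⟩
    · rw [map_mul, map_inv, map_pow, map_pow, map_gcomm, lift_a, lift_b, hgc,
        ← QuotientGroup.mk_pow, ← QuotientGroup.mk_pow, ← QuotientGroup.mk_inv,
        ← QuotientGroup.mk_mul, QuotientGroup.eq_one_iff, Heis.mem_N]
      refine ⟨1, 0, by simp, by simp, ⟨0, ?_⟩⟩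
      simp
    · rw [map_mul, map_inv, map_pow, map_pow, map_gcomm, lift_a, lift_b, hgc,
        ← QuotientGroup.mk_pow, ← QuotientGroup.mk_pow, ← QuotientGroup.mk_inv,
        ← QuotientGroup.mk_mul, QuotientGroup.eq_one_iff, Heis.mem_N]
      refine ⟨0, 1, by simp, by simp, ⟨0, ?_⟩⟩
      simp
  -- the comparison homomorphism
  let Φ : PresentedGroup rels →* Heis ⧸ NN := PresentedGroup.toGroup hrel
  -- relations in the presented group
  have hmk : ∀ r ∈ rels, PresentedGroup.mk rels r = 1 := fun r hr =>
    (QuotientGroup.eq_one_iff r).mpr (Subgroup.subset_normalClosure hr)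
  have hmem : ∀ r ∈ ({gcomm aF bF ^ p ^ γ, gcomm (gcomm aF bF) bF, gcomm (gcomm aF bF) aF,
      aF ^ p ^ α * (gcomm aF bF ^ p ^ ρ)⁻¹, bF ^ p ^ β * (gcomm aF bF ^ p ^ σ)⁻¹}
        : Set (FreeGroup Bool)), PresentedGroup.mk rels r = 1 := by
    rw [← hrels]; exact hmk
  have R1 : (gcomm (PresentedGroup.of (rels := rels) true) (PresentedGroup.of false)) ^ p ^ γ = 1 := by
    have := hmem _ (by left; rfl)
    rwa [map_pow, map_gcomm, aF, bF] at this
  have R2' : gcomm (gcomm (PresentedGroup.of (rels := rels) true) (PresentedGroup.of false))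
      (PresentedGroup.of false) = 1 := by
    have := hmem _ (by right; left; rfl)
    rwa [map_gcomm, map_gcomm, aF, bF] at this
  have R3' : gcomm (gcomm (PresentedGroup.of (rels := rels) true) (PresentedGroup.of false))
      (PresentedGroup.of true) = 1 := by
    have := hmem _ (by right; right; left; rfl)
    rwa [map_gcomm, map_gcomm, aF, bF] at this
  have R4 : (PresentedGroup.of (rels := rels) true) ^ p ^ α
      = (gcomm (PresentedGroup.of (rels := rels) true) (PresentedGroup.of false)) ^ p ^ ρ := by
    have := hmem _ (by right; right; right; left; rfl)
    rw [map_mul, map_inv, map_pow, map_pow, map_gcomm, aF, bF] at this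
    exact mul_inv_eq_one.mp this
  have R5 : (PresentedGroup.of (rels := rels) false) ^ p ^ β
      = (gcomm (PresentedGroup.of (rels := rels) true) (PresentedGroup.of false)) ^ p ^ σ := by
    have := hmem _ (by right; right; right; right; rfl)
    rw [map_mul, map_inv, map_pow, map_pow, map_gcomm, aF, bF] at this
    exact mul_inv_eq_one.mp this
  set A1 : PresentedGroup rels := PresentedGroup.of true with hA1
  set B1 : PresentedGroup rels := PresentedGroup.of false with hB1
  set C1 : PresentedGroup rels := gcomm A1 B1 with hC1
  -- C1 is central
  have hCcenter : C1 ∈ Subgroup.center (PresentedGroup rels) := by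
    rw [Subgroup.mem_center_iff]
    intro g
    have hg : g ∈ Subgroup.closure (Set.range (PresentedGroup.of : Bool → PresentedGroup rels)) := by
      rw [PresentedGroup.closure_range_of]; trivial
    induction hg using Subgroup.closure_induction with
    | mem x hx =>
      obtain ⟨t, rfl⟩ := hx
      cases t
      · exact (commute_of_gcomm_eq_one R2').symm
      · exact (commute_of_gcomm_eq_one R3').symm
    | one => simp
    | mul x y hx hy ihx ihy => rw [mul_assoc, ihy, ← mul_assoc, ihx, mul_assoc]
    | inv x hx ihx =>
      calc x⁻¹ * C1 = x⁻¹ * (C1 * x) * x⁻¹ := by group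
      _ = x⁻¹ * (x * C1) * x⁻¹ := by rw [← ihx]
      _ = C1 * x⁻¹ := by group
  -- the central subgroup Z
  set Z : Subgroup (PresentedGroup rels) := Subgroup.zpowers C1 with hZ
  have hZle : Z ≤ Subgroup.center (PresentedGroup rels) := Subgroup.zpowers_le.mpr hCcenter
  haveI hZnormal : Z.Normal := by
    constructor
    intro n hn g
    have hc := Subgroup.mem_center_iff.mp (hZle hn) g
    have : g * n * g⁻¹ = n := by rw [hc]; group
    rwa [this]
  -- the quotient by Z is generated by two commuting elements
  have hC1Z : ((C1 : PresentedGroup rels) : PresentedGroup rels ⧸ Z) = 1 :=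
    (QuotientGroup.eq_one_iff _).mpr (Subgroup.mem_zpowers C1)
  have hABcomm : Commute ((A1 : PresentedGroup rels) : PresentedGroup rels ⧸ Z)
      ((B1 : PresentedGroup rels) : PresentedGroup rels ⧸ Z) := by
    have hg : gcomm ((A1 : PresentedGroup rels) : PresentedGroup rels ⧸ Z) (↑B1) = 1 := by
      have : ((gcomm A1 B1 : PresentedGroup rels) : PresentedGroup rels ⧸ Z)
          = gcomm (↑A1) (↑B1) := by
        simp only [gcomm, QuotientGroup.mk_mul, QuotientGroup.mk_inv]
      rw [← this, ← hC1, hC1Z]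
    exact commute_of_gcomm_eq_one hg
  have hApow : ((A1 : PresentedGroup rels) : PresentedGroup rels ⧸ Z) ^ (p ^ α) = 1 := by
    rw [← QuotientGroup.mk_pow, R4, QuotientGroup.eq_one_iff]
    exact Subgroup.pow_mem Z (Subgroup.mem_zpowers C1) _
  have hBpow : ((B1 : PresentedGroup rels) : PresentedGroup rels ⧸ Z) ^ (p ^ β) = 1 := by
    rw [← QuotientGroup.mk_pow, R5, QuotientGroup.eq_one_iff]
    exact Subgroup.pow_mem Z (Subgroup.mem_zpowers C1) _
  have span : ∀ q : PresentedGroup rels ⧸ Z, ∃ m n : ℤ,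
      q = ((A1 : PresentedGroup rels) : PresentedGroup rels ⧸ Z) ^ m * (↑B1) ^ n := by
    intro q
    induction q using QuotientGroup.induction_on with
    | H g =>
      have hg : g ∈ Subgroup.closure
          (Set.range (PresentedGroup.of : Bool → PresentedGroup rels)) := by
        rw [PresentedGroup.closure_range_of]; trivial
      induction hg using Subgroup.closure_induction with
      | mem x hx =>
        obtain ⟨t, rfl⟩ := hx
        cases t
        · exact ⟨0, 1, by simp [hB1]⟩
        · exact ⟨1, 0, by simp [hA1]⟩
      | one => exact ⟨0, 0, by simp⟩
      | mul x y hx hy ihx ihy =>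
        obtain ⟨m, n, ihx⟩ := ihx
        obtain ⟨m', n', ihy⟩ := ihy
        refine ⟨m + m', n + n', ?_⟩
        have hc := ((hABcomm.zpow_zpow m' n).symm).eq
        rw [QuotientGroup.mk_mul, ihx, ihy]
        calc (↑A1 : PresentedGroup rels ⧸ Z) ^ m * (↑B1) ^ n * ((↑A1) ^ m' * (↑B1) ^ n')
            = (↑A1) ^ m * ((↑B1) ^ n * (↑A1) ^ m') * (↑B1) ^ n' := by group
        _ = (↑A1) ^ m * ((↑A1) ^ m' * (↑B1) ^ n) * (↑B1) ^ n' := by rw [hc]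
        _ = (↑A1) ^ (m + m') * (↑B1) ^ (n + n') := by rw [zpow_add, zpow_add]; group
      | inv x hx ihx =>
        obtain ⟨m, n, ihx⟩ := ihx
        refine ⟨-m, -n, ?_⟩
        have hc := ((hABcomm.zpow_zpow (-m) (-n)).symm).eq
        rw [QuotientGroup.mk_inv, ihx]
        calc ((↑A1 : PresentedGroup rels ⧸ Z) ^ m * (↑B1) ^ n)⁻¹
            = (↑B1) ^ (-n) * (↑A1) ^ (-m) := by rw [zpow_neg, zpow_neg]; group
        _ = (↑A1) ^ (-m) * (↑B1) ^ (-n) := hc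
  let f2 : ZMod (p^α) × ZMod (p^β) → PresentedGroup rels ⧸ Z := fun t =>
    ((A1 : PresentedGroup rels) : PresentedGroup rels ⧸ Z) ^ ((t.1.val : ℤ))
      * (↑B1) ^ ((t.2.val : ℤ))
  have hf2 : Function.Surjective f2 := by
    intro q
    obtain ⟨m, n, hq⟩ := span q
    refine ⟨((m : ZMod (p^α)), (n : ZMod (p^β))), ?_⟩
    have e1 : ((A1 : PresentedGroup rels) : PresentedGroup rels ⧸ Z)
        ^ (((m : ZMod (p^α)).val : ℤ)) = (↑A1) ^ m :=
      zpow_eq_zpow_of_dvd hApow (Heis.cast_dvd _ m)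
    have e2 : ((B1 : PresentedGroup rels) : PresentedGroup rels ⧸ Z)
        ^ (((n : ZMod (p^β)).val : ℤ)) = (↑B1) ^ n :=
      zpow_eq_zpow_of_dvd hBpow (Heis.cast_dvd _ n)
    rw [hq]
    simp only [f2]
    rw [e1, e2]
  haveI : Finite (PresentedGroup rels ⧸ Z) := Finite.of_surjective f2 hf2
  have hCfin : IsOfFinOrder C1 :=
    isOfFinOrder_iff_pow_eq_one.mpr ⟨p ^ γ, pow_pos hp0 γ, R1⟩
  haveI : Finite Z := hCfin.finite_zpowers.to_subtype
  have equiv := Subgroup.groupEquivQuotientProdSubgroup (s := Z)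
  haveI : Finite (PresentedGroup rels) := Finite.of_equiv _ equiv.symm
  have hGcard : Nat.card (PresentedGroup rels)
      = Nat.card (PresentedGroup rels ⧸ Z) * Nat.card Z := by
    rw [Nat.card_congr equiv, Nat.card_prod]
  have hZcard : Nat.card Z ≤ p ^ γ := by
    rw [hZ, Nat.card_zpowers]
    exact Nat.le_of_dvd (pow_pos hp0 γ) (orderOf_dvd_of_pow_eq_one R1)
  have hQtcard : Nat.card (PresentedGroup rels ⧸ Z) ≤ p ^ α * p ^ β := by
    calc Nat.card (PresentedGroup rels ⧸ Z) ≤ Nat.card (ZMod (p^α) × ZMod (p^β)) :=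
      Nat.card_le_card_of_surjective f2 hf2
    _ = p ^ α * p ^ β := by rw [Nat.card_prod, Nat.card_zmod, Nat.card_zmod]
  have upper : Nat.card (PresentedGroup rels) ≤ p ^ (α + β + γ) := by
    rw [hGcard, pow_add, pow_add]
    exact Nat.mul_le_mul hQtcard hZcard
  -- surjectivity of Φ
  have hΦsurj : Function.Surjective Φ := by
    intro q
    induction q using QuotientGroup.induction_on with
    | H g =>
      obtain ⟨x, y, z⟩ := g
      refine ⟨A1 ^ x * B1 ^ y * C1 ^ (-z), ?_⟩
      have hΦA : Φ A1 = QuotientGroup.mk Heis.A := PresentedGroup.toGroup.of hrel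
      have hΦB : Φ B1 = QuotientGroup.mk Heis.B := PresentedGroup.toGroup.of hrel
      rw [map_mul, map_mul, map_zpow, map_zpow, map_zpow, hC1, map_gcomm, hΦA, hΦB, hgc,
        ← QuotientGroup.mk_zpow, ← QuotientGroup.mk_zpow, ← QuotientGroup.mk_zpow,
        ← QuotientGroup.mk_mul, ← QuotientGroup.mk_mul]
      congr 1
      rw [Heis.A_zpow, Heis.B_zpow, Heis.C_zpow]
      ext <;> simp
  have hcard1 : Nat.card (Heis ⧸ NN) = p ^ α * p ^ β * p ^ γ :=
    Heis.card_quot (p^α) (p^β) (p^γ) (pow_pos hp0 α) (pow_pos hp0 β) (pow_pos hp0 γ) _ _ hdA hdB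
  have lower : p ^ (α + β + γ) ≤ Nat.card (PresentedGroup rels) := by
    have hle := Nat.card_le_card_of_surjective Φ hΦsurj
    rw [hcard1] at hle
    calc p ^ (α + β + γ) = p ^ α * p ^ β * p ^ γ := by rw [pow_add, pow_add]
    _ ≤ _ := hle
  have hcard : Nat.card (PresentedGroup rels) = p ^ (α + β + γ) := le_antisymm upper lower
  refine ⟨hcard, ?_⟩
  -- nilpotency class at most 2
  have hΦbij : Function.Bijective Φ := by
    rw [Nat.bijective_iff_surjective_and_card]
    exact ⟨hΦsurj, by rw [hcard, hcard1, pow_add, pow_add]⟩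
  let e : PresentedGroup rels ≃* Heis ⧸ NN := MulEquiv.ofBijective Φ hΦbij
  rw [commutator_eq_closure]
  rw [Subgroup.closure_le]
  rintro g ⟨x, y, rfl⟩
  rw [SetLike.mem_coe, Subgroup.mem_center_iff]
  intro k
  apply e.injective
  rw [map_mul, map_mul, map_commutatorElement]
  exact Subgroup.mem_center_iff.mp
    (Heis.quot_comm_central _ _ _ _ _ hdA hdB (e x) (e y)) (e k)
end

section
/- Let p be a prime, α > β ≥ γ > σ ≥ 0 with α − β = γ − σ, and let G = ⟨a, b ∣ [a,b]^{p^γ} = a^{p^α} = [a,b,b] = [a,b,a] = 1, b^{p^β} = [a,b]^{p^σ}⟩. Then the center of G equals ⟨a^{p^γ}, [a,b], b^{p^γ}⟩. -/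
/-- Relators of `G = ⟨a,b ∣ [a,b]^{p^γ} = a^{p^α} = [a,b,b] = [a,b,a] = 1,
b^{p^β} = [a,b]^{p^σ}⟩`. -/
def rels5 (p α β γ σ : ℕ) : Set (FreeGroup Bool) :=
  {gcomm aF bF ^ p ^ γ, aF ^ p ^ α, gcomm (gcomm aF bF) bF, gcomm (gcomm aF bF) aF,
    bF ^ p ^ β * (gcomm aF bF ^ p ^ σ)⁻¹}



/-- elementary division identity -/
lemma div_carry (a b q : ℕ) (hq : 0 < q) : a / q + (a % q + b) / q = (a + b) / q := by
  conv_rhs => rw [← Nat.div_add_mod a q, Nat.add_assoc, Nat.mul_add_div hq]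

lemma natCast_mod_of_dvd (a n m : ℕ) (h : m ∣ n) : ((a % n : ℕ) : ZMod m) = (a : ZMod m) := by
  conv_rhs => rw [← Nat.div_add_mod a n]
  push_cast
  rw [(ZMod.natCast_eq_zero_iff n m).2 h]
  ring

section Model

@[ext]
structure Md (p α β γ σ : ℕ) where
  i : ZMod (p ^ α)
  j : ZMod (p ^ β)
  k : ZMod (p ^ γ)

namespace Md
variable {p α β γ σ : ℕ}

/-- bilinear form -/
def e (x : ZMod (p ^ α)) (y : ZMod (p ^ β)) : ZMod (p ^ γ) :=
  (x.val : ZMod (p ^ γ)) * (y.val : ZMod (p ^ γ))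

/-- carry -/
def carr (x y : ZMod (p ^ β)) : ℕ := (x.val + y.val) / p ^ β

instance : Mul (Md p α β γ σ) :=
  ⟨fun x y => ⟨x.i + y.i, x.j + y.j, x.k + y.k + e x.i y.j + ((p ^ σ * carr x.j y.j : ℕ) : ZMod (p ^ γ))⟩⟩

instance : One (Md p α β γ σ) := ⟨⟨0, 0, 0⟩⟩

instance : Inv (Md p α β γ σ) :=
  ⟨fun x => ⟨-x.i, -x.j, -x.k + e x.i x.j - ((p ^ σ * carr (-x.j) x.j : ℕ) : ZMod (p ^ γ))⟩⟩

lemma mul_def (x y : Md p α β γ σ) :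
    x * y = ⟨x.i + y.i, x.j + y.j,
      x.k + y.k + e x.i y.j + ((p ^ σ * carr x.j y.j : ℕ) : ZMod (p ^ γ))⟩ := rfl

lemma one_def : (1 : Md p α β γ σ) = ⟨0, 0, 0⟩ := rfl

lemma inv_def (x : Md p α β γ σ) :
    x⁻¹ = ⟨-x.i, -x.j, -x.k + e x.i x.j - ((p ^ σ * carr (-x.j) x.j : ℕ) : ZMod (p ^ γ))⟩ := rfl

variable [NeZero p]

instance instNZ {n : ℕ} : NeZero (p ^ n) := ⟨pow_ne_zero _ (NeZero.ne p)⟩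

lemma e_zero_left (y : ZMod (p ^ β)) : e (0 : ZMod (p ^ α)) y = (0 : ZMod (p ^ γ)) := by
  simp [e, ZMod.val_zero]

lemma e_zero_right (x : ZMod (p ^ α)) : e x (0 : ZMod (p ^ β)) = (0 : ZMod (p ^ γ)) := by
  simp [e, ZMod.val_zero]

lemma carr_zero_left (y : ZMod (p ^ β)) : carr (0 : ZMod (p ^ β)) y = 0 := by
  simp [carr, ZMod.val_zero, Nat.div_eq_of_lt (ZMod.val_lt y)]

lemma carr_zero_right (x : ZMod (p ^ β)) : carr x (0 : ZMod (p ^ β)) = 0 := by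
  simp [carr, ZMod.val_zero, Nat.div_eq_of_lt (ZMod.val_lt x)]

variable [Fact (γ ≤ α)] [Fact (γ ≤ β)]

lemma dvd_pow_α : p ^ γ ∣ p ^ α := pow_dvd_pow p (Fact.out : γ ≤ α)
lemma dvd_pow_β : p ^ γ ∣ p ^ β := pow_dvd_pow p (Fact.out : γ ≤ β)

lemma e_add_left (x x' : ZMod (p ^ α)) (y : ZMod (p ^ β)) :
    (e (x + x') y : ZMod (p ^ γ)) = e x y + e x' y := by
  unfold e
  rw [ZMod.val_add, natCast_mod_of_dvd _ _ _ (pow_dvd_pow p (Fact.out : γ ≤ α))]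
  push_cast
  ring

lemma e_add_right (x : ZMod (p ^ α)) (y y' : ZMod (p ^ β)) :
    (e x (y + y') : ZMod (p ^ γ)) = e x y + e x y' := by
  unfold e
  rw [ZMod.val_add, natCast_mod_of_dvd _ _ _ (pow_dvd_pow p (Fact.out : γ ≤ β))]
  push_cast
  ring

lemma carr_cocycle (x y z : ZMod (p ^ β)) :
    carr x y + carr (x + y) z = carr y z + carr x (y + z) := by
  unfold carr
  have hq := Nat.pos_of_ne_zero (NeZero.ne (p ^ β))
  rw [ZMod.val_add, ZMod.val_add, div_carry _ _ _ hq, Nat.add_comm x.val ((ZMod.val y + ZMod.val z) % p ^ β), div_carry _ _ _ hq]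
  congr 1
  ring

instance : Group (Md p α β γ σ) where
  mul_assoc x y z := by
    simp only [mul_def]
    ext <;> simp only
    · ring
    · ring
    · rw [e_add_left, e_add_right]
      have h := carr_cocycle x.j y.j z.j
      have : ((p ^ σ * carr x.j y.j : ℕ) : ZMod (p ^ γ)) + ((p ^ σ * carr (x.j + y.j) z.j : ℕ) : ZMod (p ^ γ))
          = ((p ^ σ * carr y.j z.j : ℕ) : ZMod (p ^ γ)) + ((p ^ σ * carr x.j (y.j + z.j) : ℕ) : ZMod (p ^ γ)) := by
        push_cast
        have := congrArg (fun t : ℕ => ((p ^ σ * t : ℕ) : ZMod (p ^ γ))) h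
        push_cast at this
        linear_combination this
      linear_combination this
  one_mul x := by
    simp only [mul_def, one_def]
    ext <;> simp [e_zero_left, carr_zero_left]
  mul_one x := by
    simp only [mul_def, one_def]
    ext <;> simp [e_zero_right, carr_zero_right]
  inv_mul_cancel x := by
    simp only [mul_def, inv_def, one_def]
    ext <;> simp only
    · ring
    · ring
    · have : (e (-x.i) x.j + e x.i x.j : ZMod (p ^ γ)) = 0 := by
        rw [← e_add_left]; simp [e_zero_left]
      linear_combination this


section Elements
variable (hp2 : 2 ≤ p) (hβ1 : 1 ≤ β)

def aM : Md p α β γ σ := ⟨1, 0, 0⟩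
def bM : Md p α β γ σ := ⟨0, 1, 0⟩
def cM : Md p α β γ σ := ⟨0, 0, 1⟩

lemma cM_mul (x : Md p α β γ σ) : (cM : Md p α β γ σ) * x = ⟨x.i, x.j, x.k + 1⟩ := by
  simp only [mul_def, cM, e_zero_left, carr_zero_left]
  ext <;> simp <;> ring

lemma mul_cM (x : Md p α β γ σ) : x * (cM : Md p α β γ σ) = ⟨x.i, x.j, x.k + 1⟩ := by
  simp only [mul_def, cM, e_zero_right, carr_zero_right]
  ext <;> simp <;> ring

lemma cM_central (x : Md p α β γ σ) : (cM : Md p α β γ σ) * x = x * cM := by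
  rw [cM_mul, mul_cM]

lemma aM_pow (n : ℕ) : (aM : Md p α β γ σ) ^ n = ⟨(n : ZMod (p ^ α)), 0, 0⟩ := by
  induction n with
  | zero => simp [one_def]
  | succ n ih =>
      rw [pow_succ, ih]
      simp only [mul_def, aM, e_zero_right, carr_zero_right]
      ext <;> simp

lemma cM_pow (n : ℕ) : (cM : Md p α β γ σ) ^ n = ⟨0, 0, (n : ZMod (p ^ γ))⟩ := by
  induction n with
  | zero => simp [one_def]
  | succ n ih =>
      rw [pow_succ, ih, mul_cM]
      ext <;> simp

lemma cM_zpow (m : ℤ) : (cM : Md p α β γ σ) ^ m = ⟨0, 0, (m : ZMod (p ^ γ))⟩ := by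
  cases m with
  | ofNat n => rw [Int.ofNat_eq_coe, zpow_natCast, cM_pow]; ext <;> simp
  | negSucc n =>
      rw [zpow_negSucc, cM_pow, inv_def]
      ext <;> simp [e, carr, ZMod.val_zero] <;> push_cast <;> ring

include hp2 hβ1

lemma pow_β_one_lt : 1 < p ^ β :=
  lt_of_lt_of_le hp2 (le_trans (by simp) (Nat.pow_le_pow_right (by omega) hβ1))

lemma bM_pow (n : ℕ) :
    (bM : Md p α β γ σ) ^ n = ⟨0, (n : ZMod (p ^ β)), ((p ^ σ * (n / p ^ β) : ℕ) : ZMod (p ^ γ))⟩ := by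
  have hq : 1 < p ^ β := pow_β_one_lt hp2 hβ1
  induction n with
  | zero => simp [one_def, Nat.div_eq_of_lt hq]
  | succ n ih =>
      rw [pow_succ, ih]
      simp only [mul_def, bM, e_zero_right]
      have hval1 : (1 : ZMod (p ^ β)).val = 1 := (ZMod.val_one_eq_one_mod _).trans (Nat.mod_eq_of_lt hq)
      have hcarr : carr ((n : ZMod (p ^ β))) (1 : ZMod (p ^ β)) = (n % p ^ β + 1) / p ^ β := by
        rw [carr, ZMod.val_natCast, hval1]
      ext <;> simp only
      · simp
      · push_cast; ring
      · have hdiv : p ^ σ * (n / p ^ β) + p ^ σ * ((n % p ^ β + 1) / p ^ β) = p ^ σ * ((n + 1) / p ^ β) := by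
          rw [← Nat.mul_add]
          congr 1
          exact div_carry n 1 (p ^ β) (by omega)
        rw [hcarr, e_zero_left, ← hdiv]
        push_cast
        ring

lemma rel_bM : (bM : Md p α β γ σ) ^ (p ^ β) = cM ^ (p ^ σ) := by
  rw [bM_pow hp2 hβ1, cM_pow]
  have hq : 0 < p ^ β := by positivity
  ext <;> simp [Nat.div_self hq]

omit hp2 hβ1 in
lemma rel_aM : (aM : Md p α β γ σ) ^ (p ^ α) = 1 := by
  rw [aM_pow, one_def]
  ext <;> simp

omit hp2 hβ1 in
lemma rel_cM : (cM : Md p α β γ σ) ^ (p ^ γ) = 1 := by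
  rw [cM_pow, one_def]
  ext <;> simp

lemma aM_mul_bM (hα1 : 1 ≤ α) : (aM : Md p α β γ σ) * bM = (bM * aM) * cM := by
  have hq : 1 < p ^ β := pow_β_one_lt hp2 hβ1
  have hqα : 1 < p ^ α := lt_of_lt_of_le hp2 (le_trans (by simp) (Nat.pow_le_pow_right (by omega) hα1))
  have hval1β : (1 : ZMod (p ^ β)).val = 1 := (ZMod.val_one_eq_one_mod _).trans (Nat.mod_eq_of_lt hq)
  have hval1α : (1 : ZMod (p ^ α)).val = 1 := (ZMod.val_one_eq_one_mod _).trans (Nat.mod_eq_of_lt hqα)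
  ext <;> simp only [mul_def, aM, bM, cM] <;>
    simp [e, carr, hval1β, hval1α, ZMod.val_zero, Nat.div_eq_of_lt hq]

lemma gcomm_aM_bM (hα1 : 1 ≤ α) : gcomm (aM : Md p α β γ σ) bM = cM := by
  have h : gcomm (aM : Md p α β γ σ) bM = (bM * aM)⁻¹ * (aM * bM) := by rw [gcomm]; group
  rw [h, aM_mul_bM hp2 hβ1 hα1, inv_mul_cancel_left]

end Elements
end Md
end Model


section GSide
variable {G : Type*} [Group G] {A B C : G}

lemma comm_of_gcomm (h : gcomm A B = 1) : A * B = B * A := by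
  have h' : A⁻¹ * B⁻¹ * A * B = 1 := h
  calc A * B = (B * A) * (A⁻¹ * B⁻¹ * A * B) := by group
    _ = B * A := by rw [h', mul_one]

lemma gcomm_of_comm (h : A * B = B * A) : gcomm A B = 1 := by
  have : gcomm A B = A⁻¹ * B⁻¹ * (A * B) := by rw [gcomm]; group
  rw [this, h]
  group

variable (hC : ∀ g : G, C * g = g * C) (hAB : A * B = B * A * C)

include hC

lemma hzc : ∀ (m : ℤ) (g : G), C ^ m * g = g * C ^ m := fun m g =>
  ((Commute.zpow_left (hC g) m : Commute (C ^ m) g))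

include hAB

lemma hBiA : B⁻¹ * A = A * B⁻¹ * C := by
  calc B⁻¹ * A = B⁻¹ * (A * B) * B⁻¹ := by group
    _ = B⁻¹ * (B * A * C) * B⁻¹ := by rw [hAB]
    _ = A * (C * B⁻¹) := by group
    _ = A * (B⁻¹ * C) := by rw [hC]
    _ = A * B⁻¹ * C := by group

lemma hBAi : B * A⁻¹ = A⁻¹ * B * C := by
  calc B * A⁻¹ = A⁻¹ * (A * B) * A⁻¹ := by group
    _ = A⁻¹ * (B * A * C) * A⁻¹ := by rw [hAB]
    _ = A⁻¹ * B * (A * (C * A⁻¹)) := by group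
    _ = A⁻¹ * B * (A * (A⁻¹ * C)) := by rw [hC]
    _ = A⁻¹ * B * C := by group

lemma hBA : B * A = A * B * C⁻¹ := by rw [hAB]; group

lemma LB : ∀ j : ℤ, B ^ j * A = A * B ^ j * C ^ (-j) := by
  intro j
  induction j using Int.induction_on with
  | zero => simp
  | succ n ih =>
      calc B ^ ((n : ℤ) + 1) * A = B ^ (n : ℤ) * (B * A) := by
            rw [zpow_add_one]; group
        _ = B ^ (n : ℤ) * (A * B * C⁻¹) := by rw [hBA hC hAB]
        _ = ((B ^ (n : ℤ) * A) * B) * C⁻¹ := by group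
        _ = ((A * B ^ (n : ℤ) * C ^ (-(n : ℤ))) * B) * C⁻¹ := by rw [ih]
        _ = ((A * B ^ (n : ℤ)) * (C ^ (-(n : ℤ)) * B)) * C⁻¹ := by group
        _ = ((A * B ^ (n : ℤ)) * (B * C ^ (-(n : ℤ)))) * C⁻¹ := by rw [hzc hC]
        _ = A * B ^ ((n : ℤ) + 1) * C ^ (-((n : ℤ) + 1)) := by group
  | pred n ih =>
      calc B ^ (-(n : ℤ) - 1) * A = B ^ (-(n : ℤ)) * (B⁻¹ * A) := by
            rw [show (-(n : ℤ) - 1) = (-(n : ℤ)) + (-1) by ring, zpow_add]; group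
        _ = B ^ (-(n : ℤ)) * (A * B⁻¹ * C) := by rw [hBiA hC hAB]
        _ = ((B ^ (-(n : ℤ)) * A) * B⁻¹) * C := by group
        _ = ((A * B ^ (-(n : ℤ)) * C ^ (-(-(n : ℤ)))) * B⁻¹) * C := by rw [ih]
        _ = ((A * B ^ (-(n : ℤ))) * (C ^ (-(-(n : ℤ))) * B⁻¹)) * C := by group
        _ = ((A * B ^ (-(n : ℤ))) * (B⁻¹ * C ^ (-(-(n : ℤ))))) * C := by rw [hzc hC]
        _ = A * B ^ (-(n : ℤ) - 1) * C ^ (-(-(n : ℤ) - 1)) := by group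

lemma LA : ∀ i : ℤ, B * A ^ i = A ^ i * B * C ^ (-i) := by
  intro i
  induction i using Int.induction_on with
  | zero => simp
  | succ n ih =>
      calc B * A ^ ((n : ℤ) + 1) = (B * A ^ (n : ℤ)) * A := by
            rw [zpow_add_one]; group
        _ = (A ^ (n : ℤ) * B * C ^ (-(n : ℤ))) * A := by rw [ih]
        _ = (A ^ (n : ℤ) * B) * (C ^ (-(n : ℤ)) * A) := by group
        _ = (A ^ (n : ℤ) * B) * (A * C ^ (-(n : ℤ))) := by rw [hzc hC]
        _ = A ^ (n : ℤ) * (B * A) * C ^ (-(n : ℤ)) := by group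
        _ = A ^ (n : ℤ) * (A * B * C⁻¹) * C ^ (-(n : ℤ)) := by rw [hBA hC hAB]
        _ = A ^ ((n : ℤ) + 1) * B * C ^ (-((n : ℤ) + 1)) := by group
  | pred n ih =>
      calc B * A ^ (-(n : ℤ) - 1) = (B * A ^ (-(n : ℤ))) * A⁻¹ := by
            rw [show (-(n : ℤ) - 1) = (-(n : ℤ)) + (-1) by ring, zpow_add]; group
        _ = (A ^ (-(n : ℤ)) * B * C ^ (-(-(n : ℤ)))) * A⁻¹ := by rw [ih]
        _ = (A ^ (-(n : ℤ)) * B) * (C ^ (-(-(n : ℤ))) * A⁻¹) := by group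
        _ = (A ^ (-(n : ℤ)) * B) * (A⁻¹ * C ^ (-(-(n : ℤ)))) := by rw [hzc hC]
        _ = A ^ (-(n : ℤ)) * (B * A⁻¹) * C ^ (-(-(n : ℤ))) := by group
        _ = A ^ (-(n : ℤ)) * (A⁻¹ * B * C) * C ^ (-(-(n : ℤ))) := by rw [hBAi hC hAB]
        _ = A ^ (-(n : ℤ) - 1) * B * C ^ (-(-(n : ℤ) - 1)) := by group

lemma LBinv : ∀ j : ℤ, B ^ j * A⁻¹ = A⁻¹ * B ^ j * C ^ j := by
  intro j
  apply mul_right_cancel (b := A)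
  calc (B ^ j * A⁻¹) * A = B ^ j := by group
    _ = A⁻¹ * (A * B ^ j * C ^ (-j)) * C ^ j := by group
    _ = A⁻¹ * (B ^ j * A) * C ^ j := by rw [LB hC hAB]
    _ = (A⁻¹ * B ^ j * C ^ j) * A := by
        rw [mul_assoc (A⁻¹ * B ^ j) (C ^ j) A, hzc hC j A]; group

lemma nf_mul_A (i j k : ℤ) :
    (A ^ i * B ^ j * C ^ k) * A = A ^ (i + 1) * B ^ j * C ^ (k - j) := by
  calc (A ^ i * B ^ j * C ^ k) * A = (A ^ i * B ^ j) * (C ^ k * A) := by group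
    _ = (A ^ i * B ^ j) * (A * C ^ k) := by rw [hzc hC]
    _ = A ^ i * (B ^ j * A) * C ^ k := by group
    _ = A ^ i * (A * B ^ j * C ^ (-j)) * C ^ k := by rw [LB hC hAB]
    _ = A ^ (i + 1) * B ^ j * C ^ (k - j) := by group

lemma nf_mul_Ainv (i j k : ℤ) :
    (A ^ i * B ^ j * C ^ k) * A⁻¹ = A ^ (i - 1) * B ^ j * C ^ (k + j) := by
  calc (A ^ i * B ^ j * C ^ k) * A⁻¹ = (A ^ i * B ^ j) * (C ^ k * A⁻¹) := by group
    _ = (A ^ i * B ^ j) * (A⁻¹ * C ^ k) := by rw [hzc hC]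
    _ = A ^ i * (B ^ j * A⁻¹) * C ^ k := by group
    _ = A ^ i * (A⁻¹ * B ^ j * C ^ j) * C ^ k := by rw [LBinv hC hAB]
    _ = A ^ (i - 1) * B ^ j * C ^ (k + j) := by group

omit hAB

lemma nf_mul_B (i j k : ℤ) :
    (A ^ i * B ^ j * C ^ k) * B = A ^ i * B ^ (j + 1) * C ^ k := by
  calc (A ^ i * B ^ j * C ^ k) * B = (A ^ i * B ^ j) * (C ^ k * B) := by group
    _ = (A ^ i * B ^ j) * (B * C ^ k) := by rw [hzc hC]
    _ = A ^ i * B ^ (j + 1) * C ^ k := by group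

lemma nf_mul_Binv (i j k : ℤ) :
    (A ^ i * B ^ j * C ^ k) * B⁻¹ = A ^ i * B ^ (j - 1) * C ^ k := by
  calc (A ^ i * B ^ j * C ^ k) * B⁻¹ = (A ^ i * B ^ j) * (C ^ k * B⁻¹) := by group
    _ = (A ^ i * B ^ j) * (B⁻¹ * C ^ k) := by rw [hzc hC]
    _ = A ^ i * B ^ (j - 1) * C ^ k := by group

include hAB

lemma nf_B_mul (i j k : ℤ) :
    B * (A ^ i * B ^ j * C ^ k) = A ^ i * B ^ (j + 1) * C ^ (k - i) := by
  calc B * (A ^ i * B ^ j * C ^ k) = (B * A ^ i) * (B ^ j * C ^ k) := by group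
    _ = (A ^ i * B * C ^ (-i)) * (B ^ j * C ^ k) := by rw [LA hC hAB]
    _ = (A ^ i * B) * (C ^ (-i) * B ^ j) * C ^ k := by group
    _ = (A ^ i * B) * (B ^ j * C ^ (-i)) * C ^ k := by rw [hzc hC]
    _ = A ^ i * B ^ (j + 1) * C ^ (k - i) := by group

end GSide

set_option maxHeartbeats 1000000 in
theorem stmt5 (p α β γ σ : ℕ) (hp : p.Prime) (h1 : β < α) (h2 : γ ≤ β) (h3 : σ < γ)
    (h4 : α - β = γ - σ) :
    Subgroup.center (PresentedGroup (rels5 p α β γ σ)) =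
      Subgroup.closure
        {(PresentedGroup.of true : PresentedGroup (rels5 p α β γ σ)) ^ p ^ γ,
          gcomm (PresentedGroup.of true : PresentedGroup (rels5 p α β γ σ))
            (PresentedGroup.of false),
          (PresentedGroup.of false : PresentedGroup (rels5 p α β γ σ)) ^ p ^ γ} := by
  have hp2 : 2 ≤ p := hp.two_le
  haveI : NeZero p := ⟨hp.pos.ne'⟩
  haveI : Fact (γ ≤ α) := ⟨h2.trans h1.le⟩
  haveI : Fact (γ ≤ β) := ⟨h2⟩
  have hβ1 : 1 ≤ β := by omega
  have hα1 : 1 ≤ α := by omega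
  set A : PresentedGroup (rels5 p α β γ σ) := PresentedGroup.of true with hA
  set B : PresentedGroup (rels5 p α β γ σ) := PresentedGroup.of false with hB
  set C : PresentedGroup (rels5 p α β γ σ) := gcomm A B with hCdef
  -- the model homomorphism
  have hgc : gcomm (Md.aM : Md p α β γ σ) Md.bM = Md.cM := Md.gcomm_aM_bM hp2 hβ1 hα1
  let f : Bool → Md p α β γ σ := fun x => match x with
    | true => Md.aM
    | false => Md.bM
  have hfa : FreeGroup.lift f aF = Md.aM := by simp [aF, FreeGroup.lift_apply_of, f]
  have hfb : FreeGroup.lift f bF = Md.bM := by simp [bF, FreeGroup.lift_apply_of, f]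
  have hlift2 : ∀ x y : FreeGroup Bool,
      FreeGroup.lift f (gcomm x y) = gcomm (FreeGroup.lift f x) (FreeGroup.lift f y) := by
    intro x y
    simp [gcomm, map_mul, map_inv]
  have hrels : ∀ r ∈ rels5 p α β γ σ, FreeGroup.lift f r = 1 := by
    intro r hr
    simp only [rels5, Set.mem_insert_iff, Set.mem_singleton_iff] at hr
    rcases hr with rfl | rfl | rfl | rfl | rfl
    · rw [map_pow, hlift2, hfa, hfb, hgc, Md.rel_cM]
    · rw [map_pow, hfa, Md.rel_aM]
    · rw [hlift2, hlift2, hfa, hfb, hgc]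
      exact gcomm_of_comm (Md.cM_central Md.bM)
    · rw [hlift2, hlift2, hfa, hfb, hgc]
      exact gcomm_of_comm (Md.cM_central Md.aM)
    · rw [map_mul, map_inv, map_pow, map_pow, hfb, hlift2, hfa, hfb, hgc,
        Md.rel_bM hp2 hβ1, mul_inv_cancel]
  let φ := PresentedGroup.toGroup hrels
  have hφA : φ A = Md.aM := PresentedGroup.toGroup.of hrels
  have hφB : φ B = Md.bM := PresentedGroup.toGroup.of hrels
  have hφC : φ C = Md.cM := by
    rw [hCdef]
    have : φ (gcomm A B) = gcomm (φ A) (φ B) := by simp [gcomm, map_mul, map_inv]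
    rw [this, hφA, hφB, hgc]
  -- relator consequences in the presented group
  have hmk1 : ∀ r ∈ rels5 p α β γ σ, PresentedGroup.mk (rels5 p α β γ σ) r = 1 := fun r hr =>
    (QuotientGroup.eq_one_iff _).mpr (Subgroup.subset_normalClosure hr)
  have hmkgc : ∀ x y : FreeGroup Bool,
      PresentedGroup.mk (rels5 p α β γ σ) (gcomm x y) =
        gcomm (PresentedGroup.mk (rels5 p α β γ σ) x) (PresentedGroup.mk (rels5 p α β γ σ) y) := by
    intro x y
    simp [gcomm, map_mul, map_inv]
  have hmka : PresentedGroup.mk (rels5 p α β γ σ) aF = A := rfl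
  have hmkb : PresentedGroup.mk (rels5 p α β γ σ) bF = B := rfl
  have hr1 : C ^ p ^ γ = 1 := by
    have h := hmk1 _ (show gcomm aF bF ^ p ^ γ ∈ rels5 p α β γ σ from Set.mem_insert _ _)
    rwa [map_pow, hmkgc, hmka, hmkb, ← hCdef] at h
  have hr3 : gcomm C B = 1 := by
    have h := hmk1 (gcomm (gcomm aF bF) bF)
      (show _ ∈ rels5 p α β γ σ by simp [rels5])
    rwa [hmkgc, hmkgc, hmka, hmkb, ← hCdef] at h
  have hr4 : gcomm C A = 1 := by
    have h := hmk1 (gcomm (gcomm aF bF) aF)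
      (show _ ∈ rels5 p α β γ σ by simp [rels5])
    rwa [hmkgc, hmkgc, hmka, hmkb, ← hCdef] at h
  have hCA : C * A = A * C := comm_of_gcomm hr4
  have hCB : C * B = B * C := comm_of_gcomm hr3
  have hC : ∀ g, C * g = g * C := by
    intro g
    have hg : g ∈ Subgroup.centralizer {C} := by
      refine PresentedGroup.generated_by _ _ ?_ g
      intro j
      rw [Subgroup.mem_centralizer_iff]
      intro h hh
      rw [Set.mem_singleton_iff] at hh
      subst hh
      cases j
      · exact hCB
      · exact hCA
    exact Subgroup.mem_centralizer_iff.mp hg C rfl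
  have hAB : A * B = B * A * C := by rw [hCdef, gcomm]; group
  -- order of C
  have horder : ∀ m : ℤ, C ^ m = 1 → ((p ^ γ : ℕ) : ℤ) ∣ m := by
    intro m hm
    have h1' := congrArg φ hm
    rw [map_zpow, hφC, map_one, Md.cM_zpow] at h1'
    have h2' : ((m : ZMod (p ^ γ))) = 0 := congrArg Md.k h1'
    exact (ZMod.intCast_zmod_eq_zero_iff_dvd m (p ^ γ)).mp h2'
  -- normal form
  have hNF : ∀ g : PresentedGroup (rels5 p α β γ σ), ∃ i j k : ℤ, g = A ^ i * B ^ j * C ^ k := by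
    have key : ∀ w : FreeGroup Bool, ∀ i j k : ℤ, ∃ i' j' k' : ℤ,
        (A ^ i * B ^ j * C ^ k) * PresentedGroup.mk (rels5 p α β γ σ) w =
          A ^ i' * B ^ j' * C ^ k' := by
      intro w
      induction w using FreeGroup.induction_on with
      | C1 => exact fun i j k => ⟨i, j, k, by rw [map_one, mul_one]⟩
      | of x =>
          intro i j k
          cases x
          · exact ⟨i, j + 1, k, by
              rw [show PresentedGroup.mk (rels5 p α β γ σ) (FreeGroup.of false) = B from rfl,
                nf_mul_B hC i j k]⟩
          · exact ⟨i + 1, j, k - j, by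
              rw [show PresentedGroup.mk (rels5 p α β γ σ) (FreeGroup.of true) = A from rfl,
                nf_mul_A hC hAB i j k]⟩
      | inv_of x _ =>
          intro i j k
          cases x
          · exact ⟨i, j - 1, k, by
              rw [map_inv, show PresentedGroup.mk (rels5 p α β γ σ) (FreeGroup.of false) = B from rfl,
                nf_mul_Binv hC i j k]⟩
          · exact ⟨i - 1, j, k + j, by
              rw [map_inv, show PresentedGroup.mk (rels5 p α β γ σ) (FreeGroup.of true) = A from rfl,
                nf_mul_Ainv hC hAB i j k]⟩
      | mul x y ihx ihy =>
          intro i j k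
          obtain ⟨i1, j1, k1, h1⟩ := ihx i j k
          obtain ⟨i2, j2, k2, h2⟩ := ihy i1 j1 k1
          exact ⟨i2, j2, k2, by rw [map_mul, ← mul_assoc, h1, h2]⟩
    intro g
    induction g using PresentedGroup.induction_on with
    | H w =>
        obtain ⟨i, j, k, hk⟩ := key w 0 0 0
        refine ⟨i, j, k, ?_⟩
        have h0 : (A ^ (0 : ℤ) * B ^ (0 : ℤ) * C ^ (0 : ℤ)) = 1 := by group
        rw [h0, one_mul] at hk
        exact hk
  apply le_antisymm
  · intro z hz
    obtain ⟨i, j, k, rfl⟩ := hNF z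
    have hgz := Subgroup.mem_center_iff.mp hz
    have hj : ((p ^ γ : ℕ) : ℤ) ∣ j := by
      have e1 : A ^ (i + 1) * B ^ j * C ^ k = A ^ (i + 1) * B ^ j * C ^ (k - j) := by
        calc A ^ (i + 1) * B ^ j * C ^ k = A * (A ^ i * B ^ j * C ^ k) := by group
          _ = (A ^ i * B ^ j * C ^ k) * A := hgz A
          _ = A ^ (i + 1) * B ^ j * C ^ (k - j) := nf_mul_A hC hAB i j k
      have e2 : C ^ k = C ^ (k - j) := mul_left_cancel e1
      rw [sub_eq_add_neg, zpow_add] at e2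
      have e3 : C ^ (-j) = 1 := mul_eq_left.mp e2.symm
      exact (dvd_neg).mp (horder (-j) e3)
    have hi : ((p ^ γ : ℕ) : ℤ) ∣ i := by
      have e1 : A ^ i * B ^ (j + 1) * C ^ (k - i) = A ^ i * B ^ (j + 1) * C ^ k := by
        calc A ^ i * B ^ (j + 1) * C ^ (k - i) = B * (A ^ i * B ^ j * C ^ k) :=
              (nf_B_mul hC hAB i j k).symm
          _ = (A ^ i * B ^ j * C ^ k) * B := hgz B
          _ = A ^ i * B ^ (j + 1) * C ^ k := nf_mul_B hC i j k
      have e2 : C ^ (k - i) = C ^ k := mul_left_cancel e1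
      rw [sub_eq_add_neg, zpow_add] at e2
      have e3 : C ^ (-i) = 1 := mul_eq_left.mp e2
      exact (dvd_neg).mp (horder (-i) e3)
    obtain ⟨i', rfl⟩ := hi
    obtain ⟨j', rfl⟩ := hj
    refine Subgroup.mul_mem _ (Subgroup.mul_mem _ ?_ ?_) ?_
    · rw [zpow_mul, zpow_natCast]
      exact Subgroup.zpow_mem _ (Subgroup.subset_closure (Set.mem_insert _ _)) i'
    · rw [zpow_mul, zpow_natCast]
      refine Subgroup.zpow_mem _ (Subgroup.subset_closure ?_) j'
      exact Set.mem_insert_of_mem _ (Set.mem_insert_of_mem _ rfl)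
    · refine Subgroup.zpow_mem _ (Subgroup.subset_closure ?_) k
      exact Set.mem_insert_of_mem _ (Set.mem_insert _ _)
  · rw [Subgroup.closure_le]
    have hcent : ∀ z : PresentedGroup (rels5 p α β γ σ),
        z * A = A * z → z * B = B * z → z ∈ Subgroup.center (PresentedGroup (rels5 p α β γ σ)) := by
      intro z hzA hzB
      rw [Subgroup.mem_center_iff]
      intro g
      have hg : g ∈ Subgroup.centralizer {z} := by
        refine PresentedGroup.generated_by _ _ ?_ g
        intro j
        rw [Subgroup.mem_centralizer_iff]
        intro h hh
        rw [Set.mem_singleton_iff] at hh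
        subst hh
        cases j
        · exact hzB
        · exact hzA
      exact (Subgroup.mem_centralizer_iff.mp hg z rfl).symm
    rintro x hx
    simp only [Set.mem_insert_iff, Set.mem_singleton_iff] at hx
    have hCn : C ^ (-((p ^ γ : ℕ) : ℤ)) = 1 := by
      rw [zpow_neg, zpow_natCast, hr1, inv_one]
    rcases hx with rfl | rfl | rfl
    · refine hcent _ ?_ ?_
      · rw [← pow_succ, ← pow_succ']
      · have h := LA hC hAB ((p ^ γ : ℕ) : ℤ)
        rw [hCn, mul_one, zpow_natCast] at h
        exact h.symm
    · exact hcent _ hCA hCB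
    · refine hcent _ ?_ ?_
      · have h := LB hC hAB ((p ^ γ : ℕ) : ℤ)
        rw [hCn, mul_one, zpow_natCast] at h
        exact h
      · rw [← pow_succ, ← pow_succ']
end
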